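/- Let Γ be a subgroup of (ℝ,+) and set Γ⁺ = Γ ∩ [0,∞). Let J_{Γ⁺⊆Γ} be the closed *-subalgebra of the C*-algebra of bounded complex-valued functions on Γ generated by the differences 1_{a+Γ⁺} − 1_{b+Γ⁺} for a, b ∈ Γ with a < b, and let C₀^λ(ℝ) be the closed *-subalgebra of the C*-algebra of bounded complex-valued functions on ℝ generated by the indicator functions 1_{[a,b)} of half-open intervals with a, b ∈ Γ, a < b. Then there exists a unique *-algebra isomorphism Ψ : J_{Γ⁺⊆Γ} → C₀^λ(ℝ) with Ψ(1_{a+Γ⁺} − 1_{b+Γ⁺}) = 1_{[a,b)} for all a, b ∈ Γ with a < b, and Ψ is Γ-equivariant for the translation actions (γ·f)(x) = f(−γ + x) on both sides. -/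

import Mathlib

open scoped Classical BoundedContinuousFunction

noncomputable section

/-- A type synonym equipping a type with the discrete topology, so that `Disc α →ᵇ ℂ`
is the C*-algebra of all bounded complex-valued functions on `α` with the supremum
norm, pointwise operations and complex conjugation as involution. -/
def Disc (α : Type*) : Type _ := α

instance (α : Type*) : TopologicalSpace (Disc α) := ⊥
instance (α : Type*) : DiscreteTopology (Disc α) := ⟨rfl⟩

variable (Γ : AddSubgroup ℝ)

/-- The indicator function `1_{a+Γ⁺}` of `a + Γ⁺ = {a + y : y ∈ Γ, 0 ≤ y}`, as a
bounded function on `Γ`. -/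
def indGamma (a : ℝ) : Disc Γ →ᵇ ℂ :=
  BoundedContinuousFunction.ofNormedAddCommGroup
    (fun x : Γ => if ∃ y : ℝ, y ∈ Γ ∧ 0 ≤ y ∧ (x : ℝ) = a + y then (1 : ℂ) else 0)
    continuous_of_discreteTopology 1
    (by intro x; first | (split <;> simp) | (split_ifs <;> simp))

/-- The indicator function `1_{[a,∞)}`, as a bounded function on `ℝ`. -/
def indIci (a : ℝ) : Disc ℝ →ᵇ ℂ :=
  BoundedContinuousFunction.ofNormedAddCommGroup
    (fun x : ℝ => if a ≤ x then (1 : ℂ) else 0)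
    continuous_of_discreteTopology 1
    (by intro x; first | (split <;> simp) | (split_ifs <;> simp))

/-- The translation action of `γ ∈ Γ` on bounded functions on `Γ`:
`(γ · f)(x) = f(−γ + x)`. -/
def transGamma (γ : Γ) (f : Disc Γ →ᵇ ℂ) : Disc Γ →ᵇ ℂ :=
  f.compContinuous ⟨fun x : Γ => -γ + x, continuous_of_discreteTopology⟩

/-- The translation action of `γ ∈ ℝ` on bounded functions on `ℝ`:
`(γ · f)(x) = f(−γ + x)`. -/
def transReal (γ : ℝ) (f : Disc ℝ →ᵇ ℂ) : Disc ℝ →ᵇ ℂ :=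
  f.compContinuous ⟨fun x : ℝ => -γ + x, continuous_of_discreteTopology⟩

/-- The indicator function `1_{[a,b)}`, as a bounded function on `ℝ`. -/
def indIco (a b : ℝ) : Disc ℝ →ᵇ ℂ :=
  BoundedContinuousFunction.ofNormedAddCommGroup
    (fun x : ℝ => if a ≤ x ∧ x < b then (1 : ℂ) else 0)
    continuous_of_discreteTopology 1
    (by intro x; first | (split <;> simp) | (split_ifs <;> simp))

/-- `J_{Γ⁺ ⊆ Γ}`: the closed *-subalgebra of the algebra of bounded functions on `Γ`
generated by the differences `1_{a+Γ⁺} − 1_{b+Γ⁺}` for `a, b ∈ Γ`, `a < b`. -/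
def JGamma : NonUnitalStarSubalgebra ℂ (Disc Γ →ᵇ ℂ) :=
  (NonUnitalStarAlgebra.adjoin ℂ
    {g : Disc Γ →ᵇ ℂ | ∃ a b : Γ, a < b ∧
      g = indGamma Γ (a : ℝ) - indGamma Γ (b : ℝ)}).topologicalClosure

/-- `C₀^λ(ℝ)`: the closed *-subalgebra of the algebra of bounded functions on `ℝ`
generated by the indicator functions `1_{[a,b)}` for `a, b ∈ Γ`, `a < b`. -/
def CIco : NonUnitalStarSubalgebra ℂ (Disc ℝ →ᵇ ℂ) :=
  (NonUnitalStarAlgebra.adjoin ℂ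
    {g : Disc ℝ →ᵇ ℂ | ∃ a b : Γ, a < b ∧
      g = indIco (a : ℝ) (b : ℝ)}).topologicalClosure

/-!
Restriction to `Γ` sends `1_{[a,b)}` to `1_{a+Γ⁺} − 1_{b+Γ⁺}`, so it maps the *-algebra generated
by the `1_{[a,b)}` onto the one generated by the differences. It is isometric there: for such `f`,
`f x` is the limit of `f γ` as `γ ∈ Γ` increases within `(-∞, x]` (true for every generator, and
preserved by the algebra operations), so `sup |f|` is already attained on `Γ`. An isometry from a
complete space has closed range, hence restriction is a *-isomorphism `C₀^λ(ℝ) ≃ J_{Γ⁺⊆Γ}` whose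
inverse is the required `Ψ`. It is equivariant because restriction commutes with translation by
elements of `Γ`, and unique because *-homomorphisms between C*-algebras are continuous and so are
determined by their values on generators.
-/

open Filter Topology

section ExtTopologicalClosure

variable {R A B F : Type*} [CommSemiring R] [StarRing R] [TopologicalSpace A]
  [NonUnitalSemiring A] [StarRing A] [Module R A] [IsScalarTower R A A] [SMulCommClass R A A]
  [StarModule R A] [ContinuousStar A] [ContinuousConstSMul R A] [IsSemitopologicalSemiring A]
  [TopologicalSpace B] [NonUnitalSemiring B] [Star B] [Module R B] [T2Space B]
  {s : Set A} [FunLike F (NonUnitalStarAlgebra.adjoin R s).topologicalClosure B]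
  [NonUnitalAlgHomClass F R (NonUnitalStarAlgebra.adjoin R s).topologicalClosure B]
  [StarHomClass F (NonUnitalStarAlgebra.adjoin R s).topologicalClosure B]

theorem NonUnitalStarAlgHomClass.ext_topologicalClosure_adjoin {φ ψ : F}
    (hφ : Continuous φ) (hψ : Continuous ψ)
    (h : ∀ x : (NonUnitalStarAlgebra.adjoin R s).topologicalClosure, (x : A) ∈ s → φ x = ψ x) :
    φ = ψ := by
  have hdense : Dense {y : (NonUnitalStarAlgebra.adjoin R s).topologicalClosure |
      (y : A) ∈ NonUnitalStarAlgebra.adjoin R s} :=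
    Subtype.dense_iff.2 fun y hy => closure_mono (fun z hz =>
      ⟨⟨z, NonUnitalStarSubalgebra.le_topologicalClosure _ hz⟩, hz, rfl⟩ : _ ⊆ Subtype.val '' _) hy
  have hle : NonUnitalStarAlgebra.adjoin R s ≤ (NonUnitalStarAlgHom.equalizer φ ψ).map
      (NonUnitalStarSubalgebraClass.subtype (NonUnitalStarAlgebra.adjoin R s).topologicalClosure) :=
    NonUnitalStarAlgebra.adjoin_le fun x hx =>
      ⟨⟨x, NonUnitalStarSubalgebra.le_topologicalClosure _
        (NonUnitalStarAlgebra.subset_adjoin R s hx)⟩, h _ hx, rfl⟩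
  refine DFunLike.coe_injective (hφ.ext_on hdense hψ fun y hy => ?_)
  obtain ⟨z, hz, hzy⟩ := hle hy
  rw [← Subtype.ext hzy]
  exact hz

end ExtTopologicalClosure

namespace BoundedContinuousFunction

variable {α β ι : Type*} [TopologicalSpace α] [TopologicalSpace β]

def compContinuousStarAlgHom (g : C(β, α)) : (α →ᵇ ℂ) →⋆ₙₐ[ℂ] (β →ᵇ ℂ) where
  toFun f := f.compContinuous g
  map_smul' _ _ := rfl
  map_zero' := rfl
  map_add' _ _ := rfl
  map_mul' _ _ := rfl
  map_star' _ := rfl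

lemma continuous_compContinuousStarAlgHom (g : C(β, α)) :
    Continuous (compContinuousStarAlgHom g) :=
  continuous_compContinuous g

def tendstoSubalgebra (p : ι → α) (l : Filter ι) (x : α) :
    NonUnitalStarSubalgebra ℂ (α →ᵇ ℂ) where
  carrier := {f | Tendsto (f ∘ p) l (𝓝 (f x))}
  add_mem' hf hg := hf.add hg
  zero_mem' := tendsto_const_nhds
  mul_mem' hf hg := hf.mul hg
  smul_mem' c _ hf := hf.const_smul c
  star_mem' hf := hf.star

end BoundedContinuousFunction

open BoundedContinuousFunction

def restrictGamma : (Disc ℝ →ᵇ ℂ) →⋆ₙₐ[ℂ] (Disc Γ →ᵇ ℂ) :=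
  compContinuousStarAlgHom ⟨fun x : Γ => (x : ℝ), continuous_of_discreteTopology⟩

def transRealHom (c : ℝ) : (Disc ℝ →ᵇ ℂ) →⋆ₙₐ[ℂ] (Disc ℝ →ᵇ ℂ) :=
  compContinuousStarAlgHom ⟨fun x : ℝ => -c + x, continuous_of_discreteTopology⟩

lemma transRealHom_apply (c : ℝ) (f : Disc ℝ →ᵇ ℂ) : transRealHom c f = transReal c f :=
  rfl

lemma restrictGamma_transReal (γ : Γ) (f : Disc ℝ →ᵇ ℂ) :
    restrictGamma Γ (transReal γ f) = transGamma Γ γ (restrictGamma Γ f) :=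
  rfl

def icoGenerators : Set (Disc ℝ →ᵇ ℂ) :=
  {g | ∃ a b : Γ, a < b ∧ g = indIco a b}

def gammaGenerators : Set (Disc Γ →ᵇ ℂ) :=
  {g | ∃ a b : Γ, a < b ∧ g = indGamma Γ a - indGamma Γ b}

lemma indIco_apply (a b x : ℝ) : indIco a b x = if a ≤ x ∧ x < b then 1 else 0 :=
  rfl

lemma indGamma_apply (a x : Γ) : indGamma Γ a x = if (a : ℝ) ≤ x then 1 else 0 := by
  refine if_congr ⟨?_, fun h => ⟨x - a, sub_mem x.2 a.2, sub_nonneg.2 h, by ring⟩⟩ rfl rfl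
  rintro ⟨y, -, hy, hxy⟩
  linarith

lemma restrictGamma_indIco {a b : Γ} (hab : a ≤ b) :
    restrictGamma Γ (indIco a b) = indGamma Γ a - indGamma Γ b := by
  refine BoundedContinuousFunction.ext fun (x : Γ) => ?_
  replace hab : (a : ℝ) ≤ b := hab
  show indIco a b (x : ℝ) = indGamma Γ a x - indGamma Γ b x
  rw [indIco_apply, indGamma_apply, indGamma_apply]
  split_ifs <;> grind

lemma image_restrictGamma_icoGenerators :
    restrictGamma Γ '' icoGenerators Γ = gammaGenerators Γ := by
  ext g
  constructor
  · rintro ⟨_, ⟨a, b, hab, rfl⟩, rfl⟩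
    exact ⟨a, b, hab, restrictGamma_indIco Γ hab.le⟩
  · rintro ⟨a, b, hab, rfl⟩
    exact ⟨_, ⟨a, b, hab, rfl⟩, restrictGamma_indIco Γ hab.le⟩

lemma transReal_indIco (c a b : ℝ) : transReal c (indIco a b) = indIco (a + c) (b + c) := by
  refine BoundedContinuousFunction.ext fun (x : ℝ) => ?_
  show indIco a b (-c + x) = indIco (a + c) (b + c) x
  simp only [indIco_apply]
  exact if_congr ⟨fun h => ⟨by linarith [h.1], by linarith [h.2]⟩,
    fun h => ⟨by linarith [h.1], by linarith [h.2]⟩⟩ rfl rfl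

lemma indIco_mem_CIco {a b : Γ} (hab : a < b) : indIco a b ∈ CIco Γ :=
  NonUnitalStarSubalgebra.le_topologicalClosure _
    (NonUnitalStarAlgebra.subset_adjoin ℂ _ ⟨a, b, hab, rfl⟩)

lemma AddSubgroup.exists_coe_le_of_lt {a b : Γ} (hab : a < b) (x : ℝ) : ∃ γ : Γ, (γ : ℝ) ≤ x := by
  obtain ⟨n, hn⟩ := Archimedean.arch ((a : ℝ) - x) (sub_pos.2 (show (a : ℝ) < b from hab))
  refine ⟨⟨a - n • (b - a), sub_mem a.2 (AddSubgroup.nsmul_mem _ (sub_mem b.2 a.2) n)⟩, ?_⟩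
  show (a : ℝ) - n • ((b : ℝ) - a) ≤ x
  linarith

lemma indIco_mem_tendstoSubalgebra (a b : Γ) (x : ℝ) :
    indIco a b ∈ tendstoSubalgebra (α := Disc ℝ)
      (fun γ : {γ : Γ // (γ : ℝ) ≤ x} => ((γ : Γ) : ℝ)) atTop x := by
  have eventually_ge (c : Γ) : ∀ᶠ γ : {γ : Γ // (γ : ℝ) ≤ x} in atTop, (c : ℝ) ≤ x → c ≤ γ := by
    by_cases hc : (c : ℝ) ≤ x
    · filter_upwards [eventually_ge_atTop ⟨c, hc⟩] with γ hγ using fun _ => hγ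
    · exact Eventually.of_forall fun _ h => absurd h hc
  refine tendsto_const_nhds.congr' ?_
  filter_upwards [eventually_ge a, eventually_ge b] with γ ha hb
  have hγ : ((γ : Γ) : ℝ) ≤ x := γ.2
  show indIco a b x = indIco a b ((γ : Γ) : ℝ)
  refine if_congr ⟨fun h => ⟨ha h.1, hγ.trans_lt h.2⟩, fun h => ⟨h.1.trans hγ, ?_⟩⟩ rfl rfl
  exact lt_of_not_ge fun hbx => (hb hbx).not_gt h.2

lemma norm_le_norm_restrictGamma_of_mem_adjoin {f : Disc ℝ →ᵇ ℂ}
    (hf : f ∈ NonUnitalStarAlgebra.adjoin ℂ (icoGenerators Γ)) : ‖f‖ ≤ ‖restrictGamma Γ f‖ := by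
  rcases (icoGenerators Γ).eq_empty_or_nonempty with hempty | ⟨_, a, b, hab, -⟩
  · rw [hempty] at hf
    have hzero : f = 0 :=
      NonUnitalStarAlgebra.mem_bot.1 (NonUnitalStarAlgebra.adjoin_le (Set.empty_subset _) hf)
    simp [hzero]
  refine (norm_le (norm_nonneg _)).2 fun x => ?_
  obtain ⟨γ, hγ⟩ := AddSubgroup.exists_coe_le_of_lt Γ hab x
  have : Nonempty {γ : Γ // (γ : ℝ) ≤ x} := ⟨⟨γ, hγ⟩⟩
  have hlim : f ∈ tendstoSubalgebra (α := Disc ℝ)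
      (fun γ : {γ : Γ // (γ : ℝ) ≤ x} => ((γ : Γ) : ℝ)) atTop x :=
    NonUnitalStarAlgebra.adjoin_le
      (by rintro _ ⟨a, b, -, rfl⟩; exact indIco_mem_tendstoSubalgebra Γ a b x) hf
  exact le_of_tendsto hlim.norm
    (Eventually.of_forall fun γ => norm_coe_le_norm (restrictGamma Γ f) (γ : Γ))

lemma norm_restrictGamma_of_mem_CIco {f : Disc ℝ →ᵇ ℂ} (hf : f ∈ CIco Γ) :
    ‖restrictGamma Γ f‖ = ‖f‖ := by
  refine le_antisymm (norm_compContinuous_le f _) ?_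
  have hclosed : IsClosed {f : Disc ℝ →ᵇ ℂ | ‖f‖ ≤ ‖restrictGamma Γ f‖} :=
    isClosed_le continuous_norm (continuous_norm.comp (continuous_compContinuousStarAlgHom _))
  exact closure_minimal (fun g hg => norm_le_norm_restrictGamma_of_mem_adjoin Γ hg) hclosed hf

instance isClosed_CIco : IsClosed (CIco Γ : Set (Disc ℝ →ᵇ ℂ)) :=
  NonUnitalStarSubalgebra.isClosed_topologicalClosure _

instance isClosed_JGamma : IsClosed (JGamma Γ : Set (Disc Γ →ᵇ ℂ)) :=
  NonUnitalStarSubalgebra.isClosed_topologicalClosure _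

lemma isometry_restrictGamma_CIco : Isometry fun f : CIco Γ => restrictGamma Γ f :=
  AddMonoidHomClass.isometry_of_norm
    ((restrictGamma Γ).comp (NonUnitalStarSubalgebraClass.subtype _))
    fun f => norm_restrictGamma_of_mem_CIco Γ f.2

lemma map_restrictGamma_CIco : (CIco Γ).map (restrictGamma Γ) = JGamma Γ := by
  have hadjoin : (NonUnitalStarAlgebra.adjoin ℂ (icoGenerators Γ)).map (restrictGamma Γ) =
      NonUnitalStarAlgebra.adjoin ℂ (gammaGenerators Γ) := by
    rw [NonUnitalStarAlgHom.map_adjoin, image_restrictGamma_icoGenerators]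
  refine le_antisymm ?_ ?_
  · calc (CIco Γ).map (restrictGamma Γ)
        _ ≤ ((NonUnitalStarAlgebra.adjoin ℂ (icoGenerators Γ)).map
              (restrictGamma Γ)).topologicalClosure :=
          NonUnitalStarSubalgebra.map_topologicalClosure_le _
            (continuous_compContinuousStarAlgHom _)
        _ = JGamma Γ := by rw [hadjoin]; rfl
  · refine NonUnitalStarSubalgebra.topologicalClosure_minimal _ (hadjoin ▸
      NonUnitalStarSubalgebra.map_mono (NonUnitalStarSubalgebra.le_topologicalClosure _)) ?_
    rw [NonUnitalStarSubalgebra.coe_map, Set.image_eq_range]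
    exact (isometry_restrictGamma_CIco Γ).isClosedEmbedding.isClosed_range

lemma transReal_mem_CIco (γ : Γ) {f : Disc ℝ →ᵇ ℂ} (hf : f ∈ CIco Γ) :
    transReal γ f ∈ CIco Γ := by
  have hgen : transRealHom γ '' icoGenerators Γ ⊆ icoGenerators Γ := by
    rintro _ ⟨_, ⟨a, b, hab, rfl⟩, rfl⟩
    refine ⟨a + γ, b + γ, add_lt_add_left hab γ, ?_⟩
    rw [transRealHom_apply, transReal_indIco, AddSubgroup.coe_add, AddSubgroup.coe_add]
  have hmap : (CIco Γ).map (transRealHom γ) ≤ CIco Γ :=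
    calc (CIco Γ).map (transRealHom γ)
      _ ≤ ((NonUnitalStarAlgebra.adjoin ℂ (icoGenerators Γ)).map
            (transRealHom γ)).topologicalClosure :=
        NonUnitalStarSubalgebra.map_topologicalClosure_le _ (continuous_compContinuousStarAlgHom _)
      _ ≤ CIco Γ := by
        rw [NonUnitalStarAlgHom.map_adjoin]
        exact NonUnitalStarSubalgebra.topologicalClosure_mono
          (NonUnitalStarAlgebra.adjoin_mono hgen)
  exact hmap (NonUnitalStarSubalgebra.mem_map.2 ⟨f, hf, rfl⟩)

def restrictGammaEquiv : CIco Γ ≃⋆ₐ[ℂ] JGamma Γ :=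
  StarAlgEquiv.ofBijective
    (NonUnitalStarAlgHom.codRestrict
      ((restrictGamma Γ).comp (NonUnitalStarSubalgebraClass.subtype (CIco Γ))) (JGamma Γ)
      fun f => map_restrictGamma_CIco Γ ▸ NonUnitalStarSubalgebra.mem_map.2 ⟨f, f.2, rfl⟩)
    ⟨fun f g hfg => (isometry_restrictGamma_CIco Γ).injective (congrArg Subtype.val hfg),
      fun g => by
        have hg : (g : Disc Γ →ᵇ ℂ) ∈ (CIco Γ).map (restrictGamma Γ) := by
          rw [map_restrictGamma_CIco]
          exact g.2
        obtain ⟨f, hf, hfg⟩ := NonUnitalStarSubalgebra.mem_map.1 hg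
        exact ⟨⟨f, hf⟩, Subtype.ext hfg⟩⟩

lemma coe_restrictGammaEquiv_apply (f : CIco Γ) :
    (restrictGammaEquiv Γ f : Disc Γ →ᵇ ℂ) = restrictGamma Γ f :=
  rfl

lemma coe_restrictGammaEquiv_symm_of_restrictGamma_eq {g : JGamma Γ} {f : Disc ℝ →ᵇ ℂ}
    (hf : f ∈ CIco Γ) (hfg : restrictGamma Γ f = g) :
    ((restrictGammaEquiv Γ).symm g : Disc ℝ →ᵇ ℂ) = f := by
  rw [(StarAlgEquiv.symm_apply_eq _).2 (Subtype.ext hfg.symm : g = restrictGammaEquiv Γ ⟨f, hf⟩)]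

/-- Let `Γ` be a subgroup of `(ℝ,+)` and `Γ⁺ = Γ ∩ [0,∞)`.  There
exists a unique *-algebra isomorphism `Ψ : J_{Γ⁺⊆Γ} → C₀^λ(ℝ)` with
`Ψ(1_{a+Γ⁺} − 1_{b+Γ⁺}) = 1_{[a,b)}` for all `a, b ∈ Γ` with `a < b`, and `Ψ` is
`Γ`-equivariant for the translation actions `(γ·f)(x) = f(−γ+x)` on both sides. -/
theorem JGamma_iso_CIco (Γ : AddSubgroup ℝ) :
    ∃ Φ : JGamma Γ ≃⋆ₐ[ℂ] CIco Γ,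
      (∀ a b : Γ, a < b →
        ∀ h : indGamma Γ (a : ℝ) - indGamma Γ (b : ℝ) ∈ JGamma Γ,
        ((Φ ⟨indGamma Γ (a : ℝ) - indGamma Γ (b : ℝ), h⟩ : Disc ℝ →ᵇ ℂ) =
          indIco (a : ℝ) (b : ℝ))) ∧
      (∀ γ : Γ, ∀ f : Disc ↥Γ →ᵇ ℂ, ∀ hf : f ∈ JGamma Γ,
        ∀ hγf : transGamma Γ γ f ∈ JGamma Γ,
          ((Φ ⟨transGamma Γ γ f, hγf⟩ : Disc ℝ →ᵇ ℂ) =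
            transReal (γ : ℝ) (Φ ⟨f, hf⟩ : Disc ℝ →ᵇ ℂ))) ∧
      ∀ Ψ : JGamma Γ ≃⋆ₐ[ℂ] CIco Γ,
        (∀ a b : Γ, a < b →
          ∀ h : indGamma Γ (a : ℝ) - indGamma Γ (b : ℝ) ∈ JGamma Γ,
          ((Ψ ⟨indGamma Γ (a : ℝ) - indGamma Γ (b : ℝ), h⟩ : Disc ℝ →ᵇ ℂ) =
            indIco (a : ℝ) (b : ℝ))) → Ψ = Φ := by
  have generators (a b : Γ) (hab : a < b) (h) :
      (((restrictGammaEquiv Γ).symm ⟨indGamma Γ a - indGamma Γ b, h⟩ : CIco Γ) :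
        Disc ℝ →ᵇ ℂ) = indIco a b :=
    coe_restrictGammaEquiv_symm_of_restrictGamma_eq Γ (indIco_mem_CIco Γ hab)
      (restrictGamma_indIco Γ hab.le)
  refine ⟨(restrictGammaEquiv Γ).symm, generators, fun γ f hf hγf => ?_, fun Ψ hΨ => ?_⟩
  · refine coe_restrictGammaEquiv_symm_of_restrictGamma_eq Γ
      (transReal_mem_CIco Γ γ (Subtype.prop _)) ?_
    rw [restrictGamma_transReal, ← coe_restrictGammaEquiv_apply, StarAlgEquiv.apply_symm_apply]
  · refine NonUnitalStarAlgHomClass.ext_topologicalClosure_adjoin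
      (StarAlgEquiv.isometry Ψ).continuous
      (StarAlgEquiv.isometry (restrictGammaEquiv Γ).symm).continuous ?_
    rintro ⟨g, hg⟩ ⟨a, b, hab, rfl⟩
    exact Subtype.ext ((hΨ a b hab hg).trans (generators a b hab hg).symm)

end
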